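/- Let k be a field of characteristic zero, A a commutative k-algebra, w ∈ A, Ω = Ω_{A/k} the module of Kähler differentials with universal derivation d : A → Ω. Define the Hochschild–Kostant–Rosenberg map HKR_q : A^{⊗(q+2)} → ⋀^q Ω (exterior power over A) by a₀⊗a₁⊗…⊗a_q⊗a_{q+1} ↦ (1/q!)·a₀·a_{q+1}·da₁∧…∧da_q. Then for every q ≥ 0, HKR_{q+1} ∘ B_w = (dw ∧ −) ∘ HKR_q, i.e. the HKR map intertwines the insertion operator B_w on the bar complex with wedging by dw on differential forms. -/
import Mathlib


open scoped TensorProduct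

/-- The family obtained from `a : Fin n → A` by inserting `w` between the `i`-th and
`(i+1)`-st entries (the `i`-th term of the insertion operator `B_w`). -/
def insWFam8 {A : Type*} [CommRing A] (w : A) {n : ℕ} (a : Fin n → A) (i : Fin (n - 1)) :
    Fin (n + 1) → A :=
  fun j =>
    if h : (j : ℕ) ≤ (i : ℕ) then a ⟨j, by have hi := i.isLt; omega⟩
    else if h' : (j : ℕ) = (i : ℕ) + 1 then w
    else a ⟨(j : ℕ) - 1, by have hj := j.isLt; omega⟩

/-- The value of the Hochschild–Kostant–Rosenberg map on a pure tensor: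
`HKR_q (a₀ ⊗ a₁ ⊗ ⋯ ⊗ a_q ⊗ a_{q+1}) = (1/q!) · a₀ · a_{q+1} · da₁ ∧ ⋯ ∧ da_q`,
viewed inside the exterior algebra of `Ω_{A/k}` over `A` (the `q`-th exterior power is a
submodule of the exterior algebra). -/
noncomputable def hkrVal (k : Type*) {A : Type*} [Field k] [CommRing A] [Algebra k A]
    (q : ℕ) (a : Fin (q + 2) → A) : ExteriorAlgebra A (Ω[A⁄k]) :=
  (algebraMap k A ((q.factorial : k)⁻¹) * (a 0 * a (Fin.last (q + 1)))) •
    (List.ofFn fun i : Fin q =>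
      ExteriorAlgebra.ι A (KaehlerDifferential.D k A (a i.succ.castSucc))).prod

section aux

variable {A M : Type*} [CommRing A] [AddCommGroup M] [Module A M]

open ExteriorAlgebra

lemma ins_prod_aux (w : M) :
    ∀ (i : ℕ) (l : List M), i ≤ l.length →
      ((l.take i ++ w :: l.drop i).map (ι A)).prod
        = (-1 : A) ^ i • (ι A w * (l.map (ι A)).prod) := by
  intro i
  induction i with
  | zero => intro l _; simp
  | succ i ih =>
    intro l hl
    cases l with
    | nil => simp at hl
    | cons x l =>
      simp only [List.take_succ_cons, List.drop_succ_cons, List.cons_append, List.map_cons,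
        List.prod_cons]
      rw [ih l (by simpa using hl)]
      have hanti : ι A x * ι A w = -(ι A w * ι A x) :=
        eq_neg_of_add_eq_zero_left (ExteriorAlgebra.ι_add_mul_swap x w)
      rw [mul_smul_comm, ← mul_assoc, hanti, neg_mul, mul_assoc, smul_neg, pow_succ,
        mul_comm ((-1 : A) ^ i) (-1), mul_smul, neg_one_smul]

end aux

/-- Over a field `k` of characteristic zero, the HKR map
`a₀⊗a₁⊗⋯⊗a_q⊗a_{q+1} ↦ (1/q!)·a₀·a_{q+1}·da₁∧⋯∧da_q` intertwines the insertion operator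
`B_w` on the bar complex with wedging by `dw` on differential forms:
`HKR_{q+1} ∘ B_w = (dw ∧ −) ∘ HKR_q`, evaluated on pure tensors. -/
theorem stmt_8 {k A : Type*} [Field k] [CharZero k] [CommRing A] [Algebra k A] (w : A) :
    ∀ (q : ℕ) (a : Fin (q + 2) → A),
      ∑ i : Fin (q + 1), ((-1 : A) ^ (i : ℕ)) • hkrVal k (q + 1) (insWFam8 w a i)
        = ExteriorAlgebra.ι A (KaehlerDifferential.D k A w) * hkrVal k q a := by
  intro q a
  set D := KaehlerDifferential.D k A with hD
  set l : List (Ω[A⁄k]) := List.ofFn fun i : Fin q => D (a i.succ.castSucc) with hl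
  have hlen : l.length = q := by simp [hl]
  -- each summand
  have key : ∀ i : Fin (q + 1),
      hkrVal k (q + 1) (insWFam8 w a i)
        = (algebraMap k A (((q+1).factorial : k)⁻¹) * (a 0 * a (Fin.last (q + 1)))) •
            ((-1 : A) ^ (i : ℕ) •
              (ExteriorAlgebra.ι A (D w) * (l.map (ExteriorAlgebra.ι A)).prod)) := by
    intro i
    have hi := i.isLt
    have hb0 : insWFam8 w a i 0 = a 0 := by
      simp [insWFam8]
    have hbl : insWFam8 w a i (Fin.last (q + 2)) = a (Fin.last (q + 1)) := by
      simp only [insWFam8, Fin.val_last]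
      rw [dif_neg (by omega), dif_neg (by omega)]
      exact congrArg a (Fin.ext (by simp [Fin.last]))
    have hlist : (List.ofFn fun j : Fin (q + 1) =>
          D (insWFam8 w a i j.succ.castSucc))
        = l.take (i : ℕ) ++ D w :: l.drop (i : ℕ) := by
      apply List.ext_getElem
      · simp [hlen]; omega
      · intro j h1 h2
        have hjq : j < q + 1 := by simpa using h1
        rw [List.getElem_ofFn]
        rcases lt_trichotomy j (i : ℕ) with hj | hj | hj
        · rw [List.getElem_append_left (by simp [hlen]; omega)]
          rw [List.getElem_take]
          simp only [hl, List.getElem_ofFn]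
          simp only [insWFam8, Fin.coe_castSucc, Fin.val_succ]
          rw [dif_pos (by omega)]
          exact congrArg D (congrArg a (Fin.ext (by simp)))
        · rw [List.getElem_append_right (by simp [hlen]; omega)]
          rw [List.getElem_cons]
          rw [dif_pos (by simp [hlen]; omega)]
          simp only [insWFam8, Fin.coe_castSucc, Fin.val_succ]
          rw [dif_neg (by omega), dif_pos (by omega)]
        · rw [List.getElem_append_right (by simp [hlen]; omega)]
          rw [List.getElem_cons]
          rw [dif_neg (by simp [hlen]; omega)]
          rw [List.getElem_drop]
          simp only [hl, List.getElem_ofFn]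
          simp only [insWFam8, Fin.coe_castSucc, Fin.val_succ]
          rw [dif_neg (by omega), dif_neg (by omega)]
          refine congrArg D (congrArg a (Fin.ext ?_))
          simp only [List.length_take, hlen]
          simp
          omega
    have hmap : (List.ofFn fun j : Fin (q + 1) =>
          ExteriorAlgebra.ι A (D (insWFam8 w a i j.succ.castSucc)))
        = ((l.take (i : ℕ) ++ D w :: l.drop (i : ℕ)).map (ExteriorAlgebra.ι A)) := by
      rw [← hlist, List.map_ofFn]; rfl
    have hprod := ins_prod_aux (A := A) (D w) (i : ℕ) l (by rw [hlen]; omega)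
    rw [hkrVal, hb0, hbl, hmap, hprod]
  rw [Finset.sum_congr rfl fun i _ => by rw [key i]]
  -- combine signs
  have hsgn : ∀ i : Fin (q + 1),
      ((-1 : A) ^ (i : ℕ)) •
        ((algebraMap k A (((q+1).factorial : k)⁻¹) * (a 0 * a (Fin.last (q + 1)))) •
          ((-1 : A) ^ (i : ℕ) •
            (ExteriorAlgebra.ι A (D w) * (l.map (ExteriorAlgebra.ι A)).prod)))
      = (algebraMap k A (((q+1).factorial : k)⁻¹) * (a 0 * a (Fin.last (q + 1)))) •
          (ExteriorAlgebra.ι A (D w) * (l.map (ExteriorAlgebra.ι A)).prod) := by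
    intro i
    rw [smul_smul, smul_smul]
    congr 1
    have h1 : (-1 : A) ^ (i : ℕ) * (-1 : A) ^ (i : ℕ) = 1 := by
      rw [← pow_add, ← two_mul, pow_mul]; norm_num
    linear_combination (algebraMap k A (((q+1).factorial : k)⁻¹) *
      (a 0 * a (Fin.last (q + 1)))) * h1
  rw [Finset.sum_congr rfl fun i _ => hsgn i]
  rw [Finset.sum_const, Finset.card_univ, Fintype.card_fin]
  rw [← Nat.cast_smul_eq_nsmul A, smul_smul]
  have hscal : ((q + 1 : ℕ) : A) *
      (algebraMap k A (((q+1).factorial : k)⁻¹) * (a 0 * a (Fin.last (q + 1))))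
      = algebraMap k A ((q.factorial : k)⁻¹) * (a 0 * a (Fin.last (q + 1))) := by
    rw [← mul_assoc]
    congr 1
    rw [← map_natCast (algebraMap k A) (q + 1), ← map_mul]
    congr 1
    have h1 : ((q + 1).factorial : k) = ((q + 1 : ℕ) : k) * (q.factorial : k) := by
      rw [Nat.factorial_succ]; push_cast; ring
    have h2 : ((q + 1 : ℕ) : k) ≠ 0 := Nat.cast_ne_zero.mpr (by omega)
    have h3 : (q.factorial : k) ≠ 0 := Nat.cast_ne_zero.mpr q.factorial_ne_zero
    rw [h1, mul_inv, ← mul_assoc, mul_inv_cancel₀ h2, one_mul]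
  rw [hscal, hkrVal, mul_smul_comm]
  rw [hl, List.map_ofFn]
  rfl
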